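/- arXiv:2410.22351 — 9 statements merged into one kernel-verified Lean document; each statement's English description precedes it below -/
import Mathlib

section
/- If a t-norm T is general pseudo-homogeneous for F, then for all x,y∈[0,1] with (x,y)≠(0,0), T(x,y)=F(max{x,y}, min{x,y}/max{x,y}). -/
open Set Filter Topology

def IsTnorm (T : ℝ → ℝ → ℝ) : Prop :=
  (∀ x ∈ Set.Icc (0:ℝ) 1, ∀ y ∈ Set.Icc (0:ℝ) 1, T x y ∈ Set.Icc (0:ℝ) 1) ∧
  (∀ x ∈ Set.Icc (0:ℝ) 1, ∀ y ∈ Set.Icc (0:ℝ) 1, T x y = T y x) ∧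
  (∀ x ∈ Set.Icc (0:ℝ) 1, ∀ y ∈ Set.Icc (0:ℝ) 1, ∀ z ∈ Set.Icc (0:ℝ) 1,
      T x (T y z) = T (T x y) z) ∧
  (∀ x ∈ Set.Icc (0:ℝ) 1, ∀ y ∈ Set.Icc (0:ℝ) 1, ∀ z ∈ Set.Icc (0:ℝ) 1,
      y ≤ z → T x y ≤ T x z) ∧
  (∀ x ∈ Set.Icc (0:ℝ) 1, T x 1 = x)

def IsGPH (T F : ℝ → ℝ → ℝ) : Prop :=
  ∀ lam ∈ Set.Icc (0:ℝ) 1, ∀ x ∈ Set.Icc (0:ℝ) 1, ∀ y ∈ Set.Icc (0:ℝ) 1,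
    T (lam * x) (lam * y) = F lam (T x y)

noncomputable def TD : ℝ → ℝ → ℝ := fun x y => if max x y = 1 then min x y else 0

lemma IsTnorm.one_left {T : ℝ → ℝ → ℝ} (hT : IsTnorm T) {y : ℝ} (hy : y ∈ Icc (0:ℝ) 1) :
    T 1 y = y := by
  have h1 : (1:ℝ) ∈ Icc (0:ℝ) 1 := right_mem_Icc.2 zero_le_one
  rw [hT.2.1 1 h1 y hy, hT.2.2.2.2 y hy]

/-- Scaling the pair `(1, y / x)` by `λ = x` gives `(x, y)`. -/
lemma IsGPH.apply_eq_of_le {T F : ℝ → ℝ → ℝ} (hT : IsTnorm T) (h : IsGPH T F)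
    {x y : ℝ} (hx : x ∈ Icc (0:ℝ) 1) (hy : 0 ≤ y) (hyx : y ≤ x) (hx0 : 0 < x) :
    T x y = F x (y / x) := by
  have hq : y / x ∈ Icc (0:ℝ) 1 := ⟨div_nonneg hy hx.1, div_le_one_of_le₀ hyx hx.1⟩
  have key := h x hx 1 (right_mem_Icc.2 zero_le_one) (y / x) hq
  rwa [mul_one, mul_div_cancel₀ _ hx0.ne', hT.one_left hq] at key

theorem T_from_F (T F : ℝ → ℝ → ℝ) (hT : IsTnorm T) (h : IsGPH T F) :
    ∀ x ∈ Set.Icc (0:ℝ) 1, ∀ y ∈ Set.Icc (0:ℝ) 1, (x, y) ≠ ((0:ℝ), (0:ℝ)) →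
      T x y = F (max x y) (min x y / max x y) := by
  intro x hx y hy hne
  have hmax_pos : 0 < max x y := by
    by_contra! hle
    exact hne (Prod.ext (le_antisymm ((le_max_left x y).trans hle) hx.1)
      (le_antisymm ((le_max_right x y).trans hle) hy.1))
  rcases le_total y x with hyx | hxy
  · rw [max_eq_left hyx] at hmax_pos ⊢
    rw [min_eq_right hyx]
    exact h.apply_eq_of_le hT hx hy.1 hyx hmax_pos
  · rw [max_eq_right hxy] at hmax_pos ⊢
    rw [min_eq_left hxy, hT.2.1 x hx y hy]
    exact h.apply_eq_of_le hT hy hx.1 hxy hmax_pos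
end

section
/- If a t-norm T is general pseudo-homogeneous for F, then T is continuous if and only if F is continuous. -/
/-! Taking `x = 1` in the pseudo-homogeneity equation gives `F λ t = T λ (λ t)`, so `F` is `T`
composed with a continuous map of the unit square into itself. Conversely, away from the origin
`T a b = F (max a b) (min a b / max a b)`, a composition of `F` with a map that is continuous where
`max a b > 0`; at points `(0, y)` continuity of `T` follows from `0 ≤ T x y ≤ x`. -/

open Set Filter Topology

theorem max_min_div_max_mem_Icc {a b : ℝ} (ha : a ∈ Icc (0 : ℝ) 1) (hb : b ∈ Icc (0 : ℝ) 1)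
    (hm : 0 < max a b) :
    (max a b, min a b / max a b) ∈ Icc (0 : ℝ) 1 ×ˢ Icc (0 : ℝ) 1 :=
  ⟨⟨hm.le, max_le ha.2 hb.2⟩,
    ⟨div_nonneg (le_min ha.1 hb.1) hm.le, div_le_one_of_le₀ min_le_max hm.le⟩⟩

namespace IsTnorm

variable {T : ℝ → ℝ → ℝ}

theorem one_left_s6 (hT : IsTnorm T) {y : ℝ} (hy : y ∈ Icc (0 : ℝ) 1) : T 1 y = y := by
  rw [hT.2.1 1 (right_mem_Icc.2 zero_le_one) y hy, hT.2.2.2.2 y hy]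

theorem le_left (hT : IsTnorm T) {x y : ℝ} (hx : x ∈ Icc (0 : ℝ) 1) (hy : y ∈ Icc (0 : ℝ) 1) :
    T x y ≤ x := by
  simpa only [hT.2.2.2.2 x hx] using
    hT.2.2.2.1 x hx y hy 1 (right_mem_Icc.2 zero_le_one) hy.2

theorem zero_left (hT : IsTnorm T) {y : ℝ} (hy : y ∈ Icc (0 : ℝ) 1) : T 0 y = 0 :=
  have h0 : (0 : ℝ) ∈ Icc (0 : ℝ) 1 := left_mem_Icc.2 zero_le_one
  le_antisymm (hT.le_left h0 hy) (hT.1 0 h0 y hy).1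

theorem max_min (hT : IsTnorm T) {a b : ℝ} (ha : a ∈ Icc (0 : ℝ) 1) (hb : b ∈ Icc (0 : ℝ) 1) :
    T (max a b) (min a b) = T a b := by
  rcases le_total a b with hab | hab
  · rw [max_eq_right hab, min_eq_left hab, hT.2.1 b hb a ha]
  · rw [max_eq_left hab, min_eq_right hab]

theorem continuousWithinAt_zero_left (hT : IsTnorm T) {y : ℝ} (hy : y ∈ Icc (0 : ℝ) 1) :
    ContinuousWithinAt (fun p : ℝ × ℝ => T p.1 p.2) (Icc (0 : ℝ) 1 ×ˢ Icc (0 : ℝ) 1) (0, y) := by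
  have hfst : Tendsto (fun q : ℝ × ℝ => q.1) (𝓝[Icc (0 : ℝ) 1 ×ˢ Icc (0 : ℝ) 1] (0, y)) (𝓝 0) :=
    continuousAt_fst.tendsto.mono_left nhdsWithin_le_nhds
  rw [ContinuousWithinAt, hT.zero_left hy]
  refine tendsto_of_tendsto_of_tendsto_of_le_of_le' tendsto_const_nhds hfst ?_ ?_
  · filter_upwards [self_mem_nhdsWithin] with q hq using (hT.1 q.1 hq.1 q.2 hq.2).1
  · filter_upwards [self_mem_nhdsWithin] with q hq using hT.le_left hq.1 hq.2

end IsTnorm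

namespace IsGPH

variable {T F : ℝ → ℝ → ℝ}

theorem apply_eq (hT : IsTnorm T) (h : IsGPH T F) {l t : ℝ} (hl : l ∈ Icc (0 : ℝ) 1)
    (ht : t ∈ Icc (0 : ℝ) 1) : F l t = T l (l * t) := by
  have := h l hl 1 (right_mem_Icc.2 zero_le_one) t ht
  rwa [mul_one, hT.one_left_s6 ht, eq_comm] at this

theorem apply_eq_max_min (hT : IsTnorm T) (h : IsGPH T F) {a b : ℝ} (ha : a ∈ Icc (0 : ℝ) 1)
    (hb : b ∈ Icc (0 : ℝ) 1) (hm : 0 < max a b) :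
    T a b = F (max a b) (min a b / max a b) := by
  have hmem := max_min_div_max_mem_Icc ha hb hm
  rw [h.apply_eq hT hmem.1 hmem.2, mul_div_cancel₀ _ hm.ne', hT.max_min ha hb]

theorem continuousOn_F_of_continuousOn_T (hT : IsTnorm T) (h : IsGPH T F)
    (hTc : ContinuousOn (fun p : ℝ × ℝ => T p.1 p.2) (Icc (0 : ℝ) 1 ×ˢ Icc (0 : ℝ) 1)) :
    ContinuousOn (fun p : ℝ × ℝ => F p.1 p.2) (Icc (0 : ℝ) 1 ×ˢ Icc (0 : ℝ) 1) := by
  have hmaps : MapsTo (fun p : ℝ × ℝ => (p.1, p.1 * p.2))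
      (Icc (0 : ℝ) 1 ×ˢ Icc (0 : ℝ) 1) (Icc (0 : ℝ) 1 ×ˢ Icc (0 : ℝ) 1) := fun p hp =>
    ⟨hp.1, mul_nonneg hp.1.1 hp.2.1, mul_le_one₀ hp.1.2 hp.2.1 hp.2.2⟩
  exact (hTc.comp (continuous_fst.prodMk (continuous_fst.mul continuous_snd)).continuousOn
    hmaps).congr fun p hp => h.apply_eq hT hp.1 hp.2

theorem continuousWithinAt_T_of_pos (hT : IsTnorm T) (h : IsGPH T F)
    (hFc : ContinuousOn (fun p : ℝ × ℝ => F p.1 p.2) (Icc (0 : ℝ) 1 ×ˢ Icc (0 : ℝ) 1))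
    {p : ℝ × ℝ} (hp : p ∈ Icc (0 : ℝ) 1 ×ˢ Icc (0 : ℝ) 1) (hp0 : 0 < max p.1 p.2) :
    ContinuousWithinAt (fun p : ℝ × ℝ => T p.1 p.2) (Icc (0 : ℝ) 1 ×ˢ Icc (0 : ℝ) 1) p := by
  set s := Icc (0 : ℝ) 1 ×ˢ Icc (0 : ℝ) 1 ∩ {q : ℝ × ℝ | 0 < max q.1 q.2}
  set g : ℝ × ℝ → ℝ × ℝ := fun q => (max q.1 q.2, min q.1 q.2 / max q.1 q.2)
  have hU : {q : ℝ × ℝ | 0 < max q.1 q.2} ∈ 𝓝 p :=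
    (isOpen_lt continuous_const (continuous_fst.max continuous_snd)).mem_nhds hp0
  have hmaps : MapsTo g s (Icc (0 : ℝ) 1 ×ˢ Icc (0 : ℝ) 1) := fun q hq =>
    max_min_div_max_mem_Icc hq.1.1 hq.1.2 hq.2
  have hg : ContinuousWithinAt g s p :=
    ((continuous_fst.max continuous_snd).continuousAt.prodMk
      ((continuous_fst.min continuous_snd).continuousAt.div
        (continuous_fst.max continuous_snd).continuousAt hp0.ne')).continuousWithinAt
  rw [← continuousWithinAt_inter hU]
  exact ((hFc (g p) (hmaps ⟨hp, hp0⟩)).comp hg hmaps).congr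
    (fun q hq => h.apply_eq_max_min hT hq.1.1 hq.1.2 hq.2) (h.apply_eq_max_min hT hp.1 hp.2 hp0)

theorem continuousOn_T_of_continuousOn_F (hT : IsTnorm T) (h : IsGPH T F)
    (hFc : ContinuousOn (fun p : ℝ × ℝ => F p.1 p.2) (Icc (0 : ℝ) 1 ×ˢ Icc (0 : ℝ) 1)) :
    ContinuousOn (fun p : ℝ × ℝ => T p.1 p.2) (Icc (0 : ℝ) 1 ×ˢ Icc (0 : ℝ) 1) := by
  rintro ⟨x, y⟩ hp
  rcases (le_max_of_le_left hp.1.1 : (0 : ℝ) ≤ max x y).eq_or_lt with hp0 | hp0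
  · obtain rfl : x = 0 := le_antisymm (hp0 ▸ le_max_left x y) hp.1.1
    exact hT.continuousWithinAt_zero_left hp.2
  · exact h.continuousWithinAt_T_of_pos hT hFc hp hp0

end IsGPH

theorem continuity_iff_general (T F : ℝ → ℝ → ℝ) (hT : IsTnorm T)
    (h : IsGPH T F) :
    ContinuousOn (fun p : ℝ × ℝ => T p.1 p.2) (Set.Icc (0:ℝ) 1 ×ˢ Set.Icc (0:ℝ) 1) ↔
    ContinuousOn (fun p : ℝ × ℝ => F p.1 p.2) (Set.Icc (0:ℝ) 1 ×ˢ Set.Icc (0:ℝ) 1) :=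
  ⟨h.continuousOn_F_of_continuousOn_T hT, h.continuousOn_T_of_continuousOn_F hT⟩

theorem continuity_iff (T F : ℝ → ℝ → ℝ) (hT : IsTnorm T)
    (hF : ∀ x ∈ Set.Icc (0:ℝ) 1, ∀ y ∈ Set.Icc (0:ℝ) 1, F x y ∈ Set.Icc (0:ℝ) 1)
    (h : IsGPH T F) :
    ContinuousOn (fun p : ℝ × ℝ => T p.1 p.2) (Set.Icc (0:ℝ) 1 ×ˢ Set.Icc (0:ℝ) 1) ↔
    ContinuousOn (fun p : ℝ × ℝ => F p.1 p.2) (Set.Icc (0:ℝ) 1 ×ˢ Set.Icc (0:ℝ) 1) :=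
  continuity_iff_general T F hT h
end

section
/- Let T be a t-norm that is general pseudo-homogeneous for F. If F is commutative (F(x,y)=F(y,x) for all x,y∈[0,1]), then T=min. -/
/-! Homogeneity at `x = y = 1` gives `T (λ, λ) = F (λ, 1)`, and at `λ = 1` it gives `F (1, μ) = μ`;
so a commutative `F` forces `T (λ, λ) = λ`. An idempotent t-norm is `min`, since
`x = T (x, x) ≤ T (x, y) ≤ T (x, 1) = x` whenever `x ≤ y`. -/

open Set Filter Topology

namespace IsTnorm

variable {T : ℝ → ℝ → ℝ}

theorem apply_eq_left_of_le (hT : IsTnorm T) (hidem : ∀ x ∈ Icc (0:ℝ) 1, T x x = x)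
    {x y : ℝ} (hx : x ∈ Icc (0:ℝ) 1) (hy : y ∈ Icc (0:ℝ) 1) (hxy : x ≤ y) : T x y = x := by
  obtain ⟨-, -, -, hmono, hone⟩ := hT
  have h1 : (1:ℝ) ∈ Icc (0:ℝ) 1 := right_mem_Icc.2 zero_le_one
  apply le_antisymm
  · calc T x y ≤ T x 1 := hmono x hx y hy 1 h1 hy.2
      _ = x := hone x hx
  · calc x = T x x := (hidem x hx).symm
      _ ≤ T x y := hmono x hx x hx y hy hxy

theorem eq_min_of_idempotent (hT : IsTnorm T) (hidem : ∀ x ∈ Icc (0:ℝ) 1, T x x = x) :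
    ∀ x ∈ Icc (0:ℝ) 1, ∀ y ∈ Icc (0:ℝ) 1, T x y = min x y := by
  intro x hx y hy
  rcases le_total x y with hxy | hyx
  · rw [hT.apply_eq_left_of_le hidem hx hy hxy, min_eq_left hxy]
  · rw [hT.2.1 x hx y hy, hT.apply_eq_left_of_le hidem hy hx hyx, min_eq_right hyx]

end IsTnorm

namespace IsGPH

variable {T F : ℝ → ℝ → ℝ}

theorem apply_one_left (hone : ∀ x ∈ Icc (0:ℝ) 1, T x 1 = x) (h : IsGPH T F)
    {μ : ℝ} (hμ : μ ∈ Icc (0:ℝ) 1) : F 1 μ = μ := by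
  have h1 : (1:ℝ) ∈ Icc (0:ℝ) 1 := right_mem_Icc.2 zero_le_one
  simpa only [one_mul, hone μ hμ] using (h 1 h1 μ hμ 1 h1).symm

theorem apply_self_of_comm (hone : ∀ x ∈ Icc (0:ℝ) 1, T x 1 = x) (h : IsGPH T F)
    (hcomm : ∀ x ∈ Icc (0:ℝ) 1, ∀ y ∈ Icc (0:ℝ) 1, F x y = F y x) :
    ∀ x ∈ Icc (0:ℝ) 1, T x x = x := by
  intro x hx
  have h1 : (1:ℝ) ∈ Icc (0:ℝ) 1 := right_mem_Icc.2 zero_le_one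
  calc T x x = F x (T 1 1) := by simpa only [mul_one] using h x hx 1 h1 1 h1
    _ = F 1 x := by rw [hone 1 h1, hcomm x hx 1 h1]
    _ = x := h.apply_one_left hone hx

end IsGPH

theorem F_comm_implies_min (T F : ℝ → ℝ → ℝ) (hT : IsTnorm T) (h : IsGPH T F)
    (hcomm : ∀ x ∈ Set.Icc (0:ℝ) 1, ∀ y ∈ Set.Icc (0:ℝ) 1, F x y = F y x) :
    ∀ x ∈ Set.Icc (0:ℝ) 1, ∀ y ∈ Set.Icc (0:ℝ) 1, T x y = min x y :=
  hT.eq_min_of_idempotent (h.apply_self_of_comm hT.2.2.2.2 hcomm)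
end

section
/- Let T be a general pseudo-homogeneous t-norm. If lim_{x↘x₀} T(x,x) = x₀ for some x₀∈(0,1), then T(x,x)=x for all x∈(x₀,1). -/
open Set Filter Topology

/-! Pseudo-homogeneity gives `T (λx) (λy) = F λ (T x y) = T (λ · T x y) λ ≤ λ · T x y`, so along the
diagonal `x · T(y,y) ≤ y · T(x,x)` whenever `y ≤ x`. Letting `y ↘ x₀` yields `x · x₀ ≤ x₀ · T(x,x)`,
i.e. `x ≤ T(x,x)`; the reverse inequality holds for every t-norm. -/

namespace IsTnorm

variable {T : ℝ → ℝ → ℝ}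

theorem apply_le_left (hT : IsTnorm T) {x y : ℝ} (hx : x ∈ Icc (0:ℝ) 1) (hy : y ∈ Icc (0:ℝ) 1) :
    T x y ≤ x := by
  obtain ⟨-, -, -, hmono, hunit⟩ := hT
  simpa only [hunit x hx] using hmono x hx y hy 1 (right_mem_Icc.2 zero_le_one) hy.2

theorem apply_mul_mul_le {F : ℝ → ℝ → ℝ} (hT : IsTnorm T) (hF : IsGPH T F) {l x y : ℝ}
    (hl : l ∈ Icc (0:ℝ) 1) (hx : x ∈ Icc (0:ℝ) 1) (hy : y ∈ Icc (0:ℝ) 1) :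
    T (l * x) (l * y) ≤ l * T x y := by
  have hTxy : T x y ∈ Icc (0:ℝ) 1 := hT.1 x hx y hy
  have hlT : l * T x y ∈ Icc (0:ℝ) 1 :=
    ⟨mul_nonneg hl.1 hTxy.1, mul_le_one₀ hl.2 hTxy.1 hTxy.2⟩
  calc T (l * x) (l * y) = F l (T (T x y) 1) := by rw [hF l hl x hx y hy, hT.2.2.2.2 _ hTxy]
    _ = T (l * T x y) l := by rw [← hF l hl _ hTxy 1 (right_mem_Icc.2 zero_le_one), mul_one]
    _ ≤ l * T x y := hT.apply_le_left hlT hl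

theorem mul_apply_self_le {F : ℝ → ℝ → ℝ} (hT : IsTnorm T) (hF : IsGPH T F) {x y : ℝ}
    (hy : 0 ≤ y) (hyx : y ≤ x) (hx : x ≤ 1) :
    x * T y y ≤ y * T x x := by
  rcases hyx.eq_or_lt with rfl | hyx
  · exact le_rfl
  have hx_pos : 0 < x := hy.trans_lt hyx
  have hx01 : x ∈ Icc (0:ℝ) 1 := ⟨hx_pos.le, hx⟩
  have hl : y / x ∈ Icc (0:ℝ) 1 := ⟨div_nonneg hy hx_pos.le, div_le_one_of_le₀ hyx.le hx_pos.le⟩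
  have hscale := hT.apply_mul_mul_le hF hl hx01 hx01
  rw [div_mul_cancel₀ y hx_pos.ne'] at hscale
  calc x * T y y ≤ x * (y / x * T x x) := mul_le_mul_of_nonneg_left hscale hx_pos.le
    _ = y * T x x := by field_simp

end IsTnorm

theorem right_limit_idempotent (T : ℝ → ℝ → ℝ) (hT : IsTnorm T)
    (h : ∃ F : ℝ → ℝ → ℝ, IsGPH T F) (x₀ : ℝ) (hx₀ : x₀ ∈ Set.Ioo (0:ℝ) 1)
    (hlim : Tendsto (fun x => T x x) (𝓝[>] x₀) (𝓝 x₀)) :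
    ∀ x ∈ Set.Ioo x₀ 1, T x x = x := by
  obtain ⟨F, hF⟩ := h
  intro x ⟨hx₀x, hx1⟩
  have hx01 : x ∈ Icc (0:ℝ) 1 := ⟨hx₀.1.le.trans hx₀x.le, hx1.le⟩
  have hdiag : ∀ᶠ y in 𝓝[>] x₀, x * T y y ≤ y * T x x := by
    filter_upwards [Ioo_mem_nhdsGT hx₀x] with y hy
    exact hT.mul_apply_self_le hF (hx₀.1.trans hy.1).le hy.2.le hx1.le
  have hlim_le : x * x₀ ≤ x₀ * T x x :=
    le_of_tendsto_of_tendsto (hlim.const_mul x)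
      ((tendsto_nhdsWithin_of_tendsto_nhds tendsto_id).mul_const _) hdiag
  rw [mul_comm] at hlim_le
  exact le_antisymm (hT.apply_le_left hx01 hx01) (le_of_mul_le_mul_left hlim_le hx₀.1)
end

section
/- Let T be a general pseudo-homogeneous t-norm. If lim_{x↘x₀} T(x,x) = x₀ for some x₀∈(0,1), then T(x,y)=min{x,y} for all x,y∈(x₀,1]. -/
open Set Filter Topology

theorem right_limit_min (T : ℝ → ℝ → ℝ) (hT : IsTnorm T)
    (h : ∃ F : ℝ → ℝ → ℝ, IsGPH T F) (x₀ : ℝ) (hx₀ : x₀ ∈ Set.Ioo (0:ℝ) 1)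
    (hlim : Tendsto (fun x => T x x) (𝓝[>] x₀) (𝓝 x₀)) :
    ∀ x ∈ Set.Ioc x₀ 1, ∀ y ∈ Set.Ioc x₀ 1, T x y = min x y := by
  obtain ⟨F, hF⟩ := h
  obtain ⟨hrange, hcomm, hassoc, hmono, hone⟩ := hT
  obtain ⟨hx₀0, hx₀1⟩ := hx₀
  have h1 : (1:ℝ) ∈ Set.Icc (0:ℝ) 1 := by constructor <;> norm_num
  -- T p q ≤ p for p,q ∈ [0,1]
  have hle : ∀ p ∈ Set.Icc (0:ℝ) 1, ∀ q ∈ Set.Icc (0:ℝ) 1, T p q ≤ p := by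
    intro p hp q hq
    have := hmono p hp q hq 1 h1 hq.2
    rwa [hone p hp] at this
  -- key equation: T (λx) (λy) = T (λ * T x y) λ
  have key : ∀ lam ∈ Set.Icc (0:ℝ) 1, ∀ x ∈ Set.Icc (0:ℝ) 1, ∀ y ∈ Set.Icc (0:ℝ) 1,
      T (lam * x) (lam * y) = T (lam * T x y) lam := by
    intro lam hlam x hx y hy
    have hTxy := hrange x hx y hy
    have h2 := hF lam hlam x hx y hy
    have h3 := hF lam hlam (T x y) hTxy 1 h1
    rw [hone (T x y) hTxy, mul_one] at h3
    rw [h2, h3]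
  -- diagonal: T a a = a on (x₀,1]
  have hdiag : ∀ a ∈ Set.Ioc x₀ 1, T a a = a := by
    intro a ha
    have ha0 : (0:ℝ) < a := lt_trans hx₀0 ha.1
    have haI : a ∈ Set.Icc (0:ℝ) 1 := ⟨le_of_lt ha0, ha.2⟩
    set c := T a a with hc
    have hcI : c ∈ Set.Icc (0:ℝ) 1 := hrange a haI a haI
    have hca : c ≤ a := hle a haI a haI
    rcases eq_or_lt_of_le hca with heq | hlt
    · exact heq
    · exfalso
      -- for u ∈ (x₀, a], T u u ≤ u * (c/a)
      have hbound : ∀ u ∈ Set.Ioc x₀ a, T u u ≤ u * (c / a) := by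
        intro u hu
        have hu0 : (0:ℝ) < u := lt_trans hx₀0 hu.1
        have hlam : u / a ∈ Set.Icc (0:ℝ) 1 := by
          constructor
          · positivity
          · exact div_le_one_of_le₀ hu.2 (le_of_lt ha0)
        have hk := key (u / a) hlam a haI a haI
        rw [div_mul_cancel₀ _ (ne_of_gt ha0), ← hc] at hk
        have hlc : (u / a) * c ∈ Set.Icc (0:ℝ) 1 := by
          constructor
          · exact mul_nonneg hlam.1 hcI.1
          · exact mul_le_one₀ hlam.2 hcI.1 hcI.2
        calc T u u = T ((u / a) * c) (u / a) := hk
          _ ≤ (u / a) * c := hle _ hlc _ hlam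
          _ = u * (c / a) := by ring
      have hgt : x₀ * (c / a) < x₀ := by
        have : c / a < 1 := (div_lt_one ha0).mpr hlt
        nlinarith
      have htend : Tendsto (fun u => u * (c / a)) (𝓝[>] x₀) (𝓝 (x₀ * (c / a))) := by
        exact ((continuous_mul_right (c / a)).tendsto x₀).mono_left nhdsWithin_le_nhds
      have hev : ∀ᶠ u in 𝓝[>] x₀, T u u ≤ u * (c / a) := by
        filter_upwards [Ioc_mem_nhdsGT_of_mem ⟨le_refl x₀, ha.1⟩] using hbound
      have : x₀ ≤ x₀ * (c / a) := le_of_tendsto_of_tendsto hlim htend hev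
      linarith
  intro x hx y hy
  have hx0 : (0:ℝ) < x := lt_trans hx₀0 hx.1
  have hy0 : (0:ℝ) < y := lt_trans hx₀0 hy.1
  have hxI : x ∈ Set.Icc (0:ℝ) 1 := ⟨le_of_lt hx0, hx.2⟩
  have hyI : y ∈ Set.Icc (0:ℝ) 1 := ⟨le_of_lt hy0, hy.2⟩
  rcases le_total x y with hxy | hxy
  · rw [min_eq_left hxy]
    have h1' : T x x ≤ T x y := hmono x hxI x hxI y hyI hxy
    have h2' : T x y ≤ x := hle x hxI y hyI
    rw [hdiag x hx] at h1'
    linarith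
  · rw [min_eq_right hxy]
    have h1' : T y y ≤ T y x := hmono y hyI y hyI x hxI hxy
    have h2' : T y x ≤ y := hle y hyI x hxI
    rw [hdiag y hy] at h1'
    rw [hcomm x hxI y hyI]
    linarith
end

section
/- Let T be a general pseudo-homogeneous t-norm. Then either lim_{x↗1} T(x,x)=1 or lim_{x↗1} T(x,x)=0. -/
/-!
Write `g x = T x x`, which is monotone, so `g x → L` as `x ↗ 1`. Since `T (T x y) 1 = T x y`,
pseudo-homogeneity gives `T (λx) (λy) = T (λ T x y) λ`. With `y = x` this yields
`g (λx) ≤ λ g x`, and letting `x ↗ 1` in `g u = g ((u/x) x)` gives `g u ≤ u L`. It also yields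
`g (x³) ≤ T (T (g x) x) x = g (g x)`, hence `g (x³) ≤ g x · L`, and in the limit `L ≤ L²`.
As `0 ≤ L ≤ 1`, `L` is `0` or `1`.
-/

open Set Filter Topology

section

variable {T F : ℝ → ℝ → ℝ} {x y z lam : ℝ}

theorem IsTnorm.mem_Icc (hT : IsTnorm T) (hx : x ∈ Icc (0:ℝ) 1) (hy : y ∈ Icc (0:ℝ) 1) :
    T x y ∈ Icc (0:ℝ) 1 :=
  hT.1 x hx y hy

theorem IsTnorm.apply_one (hT : IsTnorm T) (hx : x ∈ Icc (0:ℝ) 1) : T x 1 = x :=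
  hT.2.2.2.2 x hx

theorem IsTnorm.assoc (hT : IsTnorm T) (hx : x ∈ Icc (0:ℝ) 1) (hy : y ∈ Icc (0:ℝ) 1)
    (hz : z ∈ Icc (0:ℝ) 1) : T (T x y) z = T x (T y z) :=
  (hT.2.2.1 x hx y hy z hz).symm

theorem IsTnorm.mono_right (hT : IsTnorm T) (hx : x ∈ Icc (0:ℝ) 1) (hy : y ∈ Icc (0:ℝ) 1)
    (hz : z ∈ Icc (0:ℝ) 1) (hyz : y ≤ z) : T x y ≤ T x z :=
  hT.2.2.2.1 x hx y hy z hz hyz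

theorem IsTnorm.mono_left (hT : IsTnorm T) (hx : x ∈ Icc (0:ℝ) 1) (hy : y ∈ Icc (0:ℝ) 1)
    (hz : z ∈ Icc (0:ℝ) 1) (hxy : x ≤ y) : T x z ≤ T y z := by
  rw [hT.2.1 x hx z hz, hT.2.1 y hy z hz]
  exact hT.mono_right hz hx hy hxy

theorem IsTnorm.le_left_s14 (hT : IsTnorm T) (hx : x ∈ Icc (0:ℝ) 1) (hy : y ∈ Icc (0:ℝ) 1) :
    T x y ≤ x :=
  (hT.mono_right hx hy (right_mem_Icc.2 zero_le_one) hy.2).trans_eq (hT.apply_one hx)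

theorem IsTnorm.monotoneOn_diag (hT : IsTnorm T) : MonotoneOn (fun x => T x x) (Icc 0 1) :=
  fun _ ha _ hb hab => (hT.mono_right ha ha hb hab).trans (hT.mono_left ha hb hb hab)

theorem IsTnorm.exists_tendsto_diag_nhdsLT_one (hT : IsTnorm T) :
    ∃ L, Tendsto (fun x => T x x) (𝓝[<] 1) (𝓝 L) :=
  ⟨_, MonotoneOn.tendsto_nhdsWithin_Ioo_left (nonempty_Ioo.2 zero_lt_one)
    (hT.monotoneOn_diag.mono Ioo_subset_Icc_self)
    ⟨1, forall_mem_image.2 fun _ ha => (hT.mem_Icc (Ioo_subset_Icc_self ha)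
      (Ioo_subset_Icc_self ha)).2⟩⟩

theorem IsTnorm.limit_diag_mem_Icc (hT : IsTnorm T) {L : ℝ}
    (hL : Tendsto (fun x => T x x) (𝓝[<] 1) (𝓝 L)) : L ∈ Icc (0:ℝ) 1 := by
  refine isClosed_Icc.mem_of_tendsto hL ?_
  filter_upwards [Ioo_mem_nhdsLT zero_lt_one] with x hx
  exact hT.mem_Icc (Ioo_subset_Icc_self hx) (Ioo_subset_Icc_self hx)

theorem IsGPH.apply_mul_mul (hF : IsGPH T F) (hT : IsTnorm T) (hlam : lam ∈ Icc (0:ℝ) 1)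
    (hx : x ∈ Icc (0:ℝ) 1) (hy : y ∈ Icc (0:ℝ) 1) :
    T (lam * x) (lam * y) = T (lam * T x y) lam := by
  have hxy := hT.mem_Icc hx hy
  have h := hF lam hlam (T x y) hxy 1 (right_mem_Icc.2 zero_le_one)
  rw [mul_one, hT.apply_one hxy] at h
  rw [hF lam hlam x hx y hy, h]

theorem IsGPH.diag_mul_le_mul (hF : IsGPH T F) (hT : IsTnorm T) (hlam : lam ∈ Icc (0:ℝ) 1)
    (hx : x ∈ Icc (0:ℝ) 1) : T (lam * x) (lam * x) ≤ lam * T x x := by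
  rw [hF.apply_mul_mul hT hlam hx hx]
  exact hT.le_left_s14 (unitInterval.mul_mem hlam (hT.mem_Icc hx hx)) hlam

theorem IsGPH.diag_mul_le_apply (hF : IsGPH T F) (hT : IsTnorm T) (hlam : lam ∈ Icc (0:ℝ) 1)
    (hx : x ∈ Icc (0:ℝ) 1) : T (lam * x) (lam * x) ≤ T (T x x) lam := by
  have hxx := hT.mem_Icc hx hx
  rw [hF.apply_mul_mul hT hlam hx hx]
  exact hT.mono_left (unitInterval.mul_mem hlam hxx) hxx hlam
    (mul_le_of_le_one_left hxx.1 hlam.2)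

theorem IsGPH.diag_pow_three_le (hF : IsGPH T F) (hT : IsTnorm T) (hx : x ∈ Icc (0:ℝ) 1) :
    T (x ^ 3) (x ^ 3) ≤ T (T x x) (T x x) := by
  have hxx := hT.mem_Icc hx hx
  have hsq := unitInterval.mul_mem hx hx
  calc T (x ^ 3) (x ^ 3) = T (x * (x * x)) (x * (x * x)) := by ring_nf
    _ ≤ T (T (x * x) (x * x)) x := hF.diag_mul_le_apply hT hx hsq
    _ ≤ T (T (T x x) x) x :=
      hT.mono_left (hT.mem_Icc hsq hsq) (hT.mem_Icc hxx hx) hx (hF.diag_mul_le_apply hT hx hx)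
    _ = T (T x x) (T x x) := hT.assoc hxx hx hx

theorem IsGPH.diag_le_mul_limit (hF : IsGPH T F) (hT : IsTnorm T) {L u : ℝ}
    (hL : Tendsto (fun x => T x x) (𝓝[<] 1) (𝓝 L)) (hu : u ∈ Ico (0:ℝ) 1) : T u u ≤ u * L := by
  have hlim : Tendsto (fun x => u / x * T x x) (𝓝[<] 1) (𝓝 (u / 1 * L)) :=
    ((tendsto_const_nhds.div tendsto_id one_ne_zero).mono_left nhdsWithin_le_nhds).mul hL
  rw [div_one] at hlim
  refine ge_of_tendsto hlim ?_
  filter_upwards [Ioo_mem_nhdsLT hu.2] with x hx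
  have hx0 : 0 < x := hu.1.trans_lt hx.1
  have hlam : u / x ∈ Icc (0:ℝ) 1 := ⟨div_nonneg hu.1 hx0.le, (div_le_one hx0).2 hx.1.le⟩
  simpa only [div_mul_cancel₀ u hx0.ne'] using
    hF.diag_mul_le_mul hT hlam ⟨hx0.le, hx.2.le⟩

theorem IsGPH.limit_le_sq (hF : IsGPH T F) (hT : IsTnorm T) {L : ℝ}
    (hL : Tendsto (fun x => T x x) (𝓝[<] 1) (𝓝 L)) : L ≤ L * L := by
  have hcube : Tendsto (fun x : ℝ => x ^ 3) (𝓝[<] 1) (𝓝[<] 1) := by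
    refine tendsto_nhdsWithin_of_tendsto_nhds_of_eventually_within _
      (((continuous_pow 3).tendsto' 1 1 (one_pow 3)).mono_left nhdsWithin_le_nhds) ?_
    filter_upwards [Ioo_mem_nhdsLT zero_lt_one] with x hx
    exact pow_lt_one₀ hx.1.le hx.2 three_ne_zero
  refine le_of_tendsto_of_tendsto (hL.comp hcube) (hL.mul_const L) ?_
  filter_upwards [Ioo_mem_nhdsLT zero_lt_one] with x hx
  have hxI : x ∈ Icc (0:ℝ) 1 := Ioo_subset_Icc_self hx
  have hxx := hT.mem_Icc hxI hxI
  exact (hF.diag_pow_three_le hT hxI).trans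
    (hF.diag_le_mul_limit hT hL ⟨hxx.1, (hT.le_left_s14 hxI hxI).trans_lt hx.2⟩)

theorem IsGPH.limit_diag_eq_zero_or_one (hF : IsGPH T F) (hT : IsTnorm T) {L : ℝ}
    (hL : Tendsto (fun x => T x x) (𝓝[<] 1) (𝓝 L)) : L = 0 ∨ L = 1 := by
  have hL01 := hT.limit_diag_mem_Icc hL
  have hsq := hF.limit_le_sq hT hL
  rcases hL01.1.eq_or_lt with h0 | h0
  · exact Or.inl h0.symm
  · exact Or.inr (le_antisymm hL01.2 (le_of_mul_le_mul_right (by linarith) h0))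

end

theorem left_limit_at_one (T : ℝ → ℝ → ℝ) (hT : IsTnorm T)
    (h : ∃ F : ℝ → ℝ → ℝ, IsGPH T F) :
    Tendsto (fun x => T x x) (𝓝[<] (1:ℝ)) (𝓝 1) ∨
    Tendsto (fun x => T x x) (𝓝[<] (1:ℝ)) (𝓝 0) := by
  obtain ⟨F, hF⟩ := h
  obtain ⟨L, hL⟩ := hT.exists_tendsto_diag_nhdsLT_one
  rcases hF.limit_diag_eq_zero_or_one hT hL with rfl | rfl
  · exact Or.inr hL
  · exact Or.inl hL
end

section
/- A continuous t-norm T that is general pseudo-homogeneous for some binary function F cannot be a non-trivial ordinal sum of continuous Archimedean t-norms; concretely, if T is a continuous general pseudo-homogeneous t-norm that has an idempotent element a∈(0,1) (T(a,a)=a) together with some x∈(a,1) with T(x,x)<x, then a contradiction follows. (Equivalently: a continuous general pseudo-homogeneous t-norm has no interior idempotent elements unless T=min.) -/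
/-! Pseudo-homogeneity forces `T (λx) (λy) = T (λ T(x,y)) λ ≤ λ T(x,y)`, since `T(x,y) = T(T(x,y), 1)`.
Scaling `x` down to the idempotent `a` with `λ = a / x` then gives `a = T(a,a) ≤ (a/x) T(x,x) < a`. -/

open Set Filter Topology

theorem IsTnorm.apply_le_left_s17 {T : ℝ → ℝ → ℝ} (hT : IsTnorm T) {x y : ℝ}
    (hx : x ∈ Icc (0:ℝ) 1) (hy : y ∈ Icc (0:ℝ) 1) : T x y ≤ x := by
  obtain ⟨-, -, -, hmono, hunit⟩ := hT
  calc T x y ≤ T x 1 := hmono x hx y hy 1 ⟨zero_le_one, le_rfl⟩ hy.2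
    _ = x := hunit x hx

theorem IsGPH.apply_mul_mul_le {T F : ℝ → ℝ → ℝ} (hT : IsTnorm T) (hF : IsGPH T F)
    {lam x y : ℝ} (hlam : lam ∈ Icc (0:ℝ) 1) (hx : x ∈ Icc (0:ℝ) 1) (hy : y ∈ Icc (0:ℝ) 1) :
    T (lam * x) (lam * y) ≤ lam * T x y := by
  have hxy : T x y ∈ Icc (0:ℝ) 1 := hT.1 x hx y hy
  have h1 : (1:ℝ) ∈ Icc (0:ℝ) 1 := ⟨zero_le_one, le_rfl⟩
  have hscaled : lam * T x y ∈ Icc (0:ℝ) 1 :=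
    ⟨mul_nonneg hlam.1 hxy.1, mul_le_one₀ hlam.2 hxy.1 hxy.2⟩
  calc T (lam * x) (lam * y) = F lam (T (T x y) 1) := by
        rw [hT.2.2.2.2 _ hxy, hF lam hlam x hx y hy]
    _ = T (lam * T x y) lam := by rw [← hF lam hlam _ hxy 1 h1, mul_one]
    _ ≤ lam * T x y := hT.apply_le_left_s17 hscaled hlam

theorem no_interior_idempotent_general (T : ℝ → ℝ → ℝ) (hT : IsTnorm T)
    (h : ∃ F : ℝ → ℝ → ℝ, IsGPH T F)
    (a : ℝ) (ha : a ∈ Set.Ioo (0:ℝ) 1) (hid : T a a = a)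
    (x : ℝ) (hx : x ∈ Set.Ioo a 1) (hlt : T x x < x) : False := by
  obtain ⟨F, hF⟩ := h
  have hx0 : 0 < x := ha.1.trans hx.1
  have hxI : x ∈ Icc (0:ℝ) 1 := ⟨hx0.le, hx.2.le⟩
  have hlam0 : 0 < a / x := div_pos ha.1 hx0
  have hlam : a / x ∈ Icc (0:ℝ) 1 := ⟨hlam0.le, (div_le_one hx0).2 hx.1.le⟩
  have hscale := hF.apply_mul_mul_le hT hlam hxI hxI
  rw [div_mul_cancel₀ a hx0.ne', hid] at hscale
  have hshrink : a / x * T x x < a / x * x := mul_lt_mul_of_pos_left hlt hlam0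
  rw [div_mul_cancel₀ a hx0.ne'] at hshrink
  linarith

theorem no_interior_idempotent (T : ℝ → ℝ → ℝ) (hT : IsTnorm T)
    (h : ∃ F : ℝ → ℝ → ℝ, IsGPH T F)
    (hcont : ContinuousOn (fun p : ℝ × ℝ => T p.1 p.2)
      (Set.Icc (0:ℝ) 1 ×ˢ Set.Icc (0:ℝ) 1))
    (a : ℝ) (ha : a ∈ Set.Ioo (0:ℝ) 1) (hid : T a a = a)
    (x : ℝ) (hx : x ∈ Set.Ioo a 1) (hlt : T x x < x) : False :=
  no_interior_idempotent_general T hT h a ha hid x hx hlt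
end

section
/- For each β>0, the t-norm T(x,y)=(max{x^β+y^β−1,0})^{1/β} for (x,y)∈(0,1]² and T(x,y)=0 otherwise, is general pseudo-homogeneous for F(x,y)=(max{x^β+(xy)^β−1,0})^{1/β} for (x,y)∈(0,1]² and F(x,y)=0 otherwise; i.e., T(λx,λy)=F(λ,T(x,y)) for all x,y,λ∈[0,1]. -/
open Set Filter Topology

noncomputable def Tss (β : ℝ) : ℝ → ℝ → ℝ := fun x y =>
  if x ∈ Set.Ioc (0:ℝ) 1 ∧ y ∈ Set.Ioc (0:ℝ) 1 then
    (max (x ^ β + y ^ β - 1) 0) ^ (1 / β) else 0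

noncomputable def Fss (β : ℝ) : ℝ → ℝ → ℝ := fun x y =>
  if x ∈ Set.Ioc (0:ℝ) 1 ∧ y ∈ Set.Ioc (0:ℝ) 1 then
    (max (x ^ β + (x * y) ^ β - 1) 0) ^ (1 / β) else 0


/-!
With `s = x ^ β + y ^ β - 1`, the two sides are the `1 / β`-th powers of the truncations at `0`
of `λ ^ β (s + 1) - 1` and of `λ ^ β (max s 0 + 1) - 1`; these agree because `λ ^ β ≤ 1`.
If one of `λ`, `x`, `y` vanishes, both sides are `0`.
-/

namespace SchweizerSklar

variable {β : ℝ}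

@[simp] lemma Tss_zero_left (y : ℝ) : Tss β 0 y = 0 := by simp [Tss]

@[simp] lemma Tss_zero_right (x : ℝ) : Tss β x 0 = 0 := by simp [Tss]

@[simp] lemma Fss_zero_left (y : ℝ) : Fss β 0 y = 0 := by simp [Fss]

@[simp] lemma Fss_zero_right (x : ℝ) : Fss β x 0 = 0 := by simp [Fss]

lemma Tss_of_mem {x y : ℝ} (hx : x ∈ Ioc (0 : ℝ) 1) (hy : y ∈ Ioc (0 : ℝ) 1) :
    Tss β x y = (max (x ^ β + y ^ β - 1) 0) ^ (1 / β) :=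
  if_pos ⟨hx, hy⟩

lemma Tss_rpow (hβ : β ≠ 0) {x y : ℝ} (hx : x ∈ Ioc (0 : ℝ) 1) (hy : y ∈ Ioc (0 : ℝ) 1) :
    Tss β x y ^ β = max (x ^ β + y ^ β - 1) 0 := by
  rw [Tss_of_mem hx hy, one_div, Real.rpow_inv_rpow (le_max_right _ _) hβ]

lemma Tss_mem_Icc (hβ : 0 < β) {x y : ℝ} (hx : x ∈ Ioc (0 : ℝ) 1) (hy : y ∈ Ioc (0 : ℝ) 1) :
    Tss β x y ∈ Icc (0 : ℝ) 1 := by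
  have hxβ : x ^ β ≤ 1 := Real.rpow_le_one hx.1.le hx.2 hβ.le
  have hyβ : y ^ β ≤ 1 := Real.rpow_le_one hy.1.le hy.2 hβ.le
  rw [Tss_of_mem hx hy]
  exact ⟨by positivity,
    Real.rpow_le_one (le_max_right _ _) (max_le (by linarith) zero_le_one) (by positivity)⟩

/-- At `t = 0` the "otherwise" branch of `Fss` still agrees with the formula, as `lam ^ β ≤ 1`. -/
lemma Fss_of_mem (hβ : 0 < β) {lam t : ℝ} (hlam : lam ∈ Ioc (0 : ℝ) 1)
    (ht : t ∈ Icc (0 : ℝ) 1) :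
    Fss β lam t = (max (lam ^ β + (lam * t) ^ β - 1) 0) ^ (1 / β) := by
  rcases ht.1.eq_or_lt with rfl | ht0
  · have hlamβ : lam ^ β ≤ 1 := Real.rpow_le_one hlam.1.le hlam.2 hβ.le
    rw [Fss_zero_right, mul_zero, Real.zero_rpow hβ.ne', add_zero,
      max_eq_right (by linarith), Real.zero_rpow (by positivity)]
  · exact if_pos ⟨hlam, ht0, ht.2⟩

lemma max_mul_add_mul_sub_one {c : ℝ} (hc0 : 0 ≤ c) (hc1 : c ≤ 1) (a b : ℝ) :
    max (c * a + c * b - 1) 0 = max (c + c * max (a + b - 1) 0 - 1) 0 := by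
  rcases le_total (a + b - 1) 0 with hs | hs
  · rw [max_eq_right hs, max_eq_right (by nlinarith), max_eq_right (by linarith)]
  · rw [max_eq_left hs]
    ring_nf

lemma mul_mem_Ioc {a b : ℝ} (ha : a ∈ Ioc (0 : ℝ) 1) (hb : b ∈ Ioc (0 : ℝ) 1) :
    a * b ∈ Ioc (0 : ℝ) 1 :=
  ⟨mul_pos ha.1 hb.1, mul_le_one₀ ha.2 hb.1.le hb.2⟩

end SchweizerSklar

open SchweizerSklar in
theorem schweizer_sklar_pos_general_pseudo_homogeneous (β : ℝ) (hβ : 0 < β) :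
    IsGPH (Tss β) (Fss β) := by
  intro lam hlam x hx y hy
  by_cases hpos : 0 < lam ∧ 0 < x ∧ 0 < y
  · obtain ⟨hlam0, hx0, hy0⟩ := hpos
    have hlam' : lam ∈ Ioc (0 : ℝ) 1 := ⟨hlam0, hlam.2⟩
    have hx' : x ∈ Ioc (0 : ℝ) 1 := ⟨hx0, hx.2⟩
    have hy' : y ∈ Ioc (0 : ℝ) 1 := ⟨hy0, hy.2⟩
    rw [Tss_of_mem (mul_mem_Ioc hlam' hx') (mul_mem_Ioc hlam' hy'),
      Fss_of_mem hβ hlam' (Tss_mem_Icc hβ hx' hy'), Real.mul_rpow hlam.1 hx.1,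
      Real.mul_rpow hlam.1 hy.1, Real.mul_rpow hlam.1 (Tss_mem_Icc hβ hx' hy').1,
      Tss_rpow hβ.ne' hx' hy']
    have hlamβ : lam ^ β ≤ 1 := Real.rpow_le_one hlam.1 hlam.2 hβ.le
    congr 1
    exact max_mul_add_mul_sub_one (by positivity) hlamβ _ _
  · have hzero : lam = 0 ∨ x = 0 ∨ y = 0 := by
      by_contra! h
      exact hpos ⟨hlam.1.lt_of_ne' h.1, hx.1.lt_of_ne' h.2.1, hy.1.lt_of_ne' h.2.2⟩
    rcases hzero with rfl | rfl | rfl <;> simp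
end

section
/- For each β<0, the t-norm T(x,y)=(x^β+y^β−1)^{1/β} for (x,y)∈(0,1]² and T(x,y)=0 otherwise, is general pseudo-homogeneous for F(x,y)=(x^β+(xy)^β−1)^{1/β} for (x,y)∈(0,1]² and F(x,y)=0 otherwise; i.e., T(λx,λy)=F(λ,T(x,y)) for all x,y,λ∈[0,1]. -/
open Set Filter Topology

noncomputable def Tssn (β : ℝ) : ℝ → ℝ → ℝ := fun x y =>
  if x ∈ Set.Ioc (0:ℝ) 1 ∧ y ∈ Set.Ioc (0:ℝ) 1 then
    (x ^ β + y ^ β - 1) ^ (1 / β) else 0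

noncomputable def Fssn (β : ℝ) : ℝ → ℝ → ℝ := fun x y =>
  if x ∈ Set.Ioc (0:ℝ) 1 ∧ y ∈ Set.Ioc (0:ℝ) 1 then
    (x ^ β + (x * y) ^ β - 1) ^ (1 / β) else 0

theorem schweizer_sklar_neg_general_pseudo_homogeneous (β : ℝ) (hβ : β < 0) :
    IsGPH (Tssn β) (Fssn β) := by
  intro lam hlam x hx y hy
  have hb : β ≠ 0 := hβ.ne
  unfold Tssn Fssn
  rcases eq_or_lt_of_le hlam.1 with hl0 | hl0
  · simp [← hl0, Set.mem_Ioc]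
  rcases eq_or_lt_of_le hx.1 with hx0 | hx0
  · simp [← hx0, Set.mem_Ioc, not_lt.mpr hl0.le, mul_nonneg hl0.le]
  rcases eq_or_lt_of_le hy.1 with hy0 | hy0
  · simp [← hy0, Set.mem_Ioc, not_lt.mpr hl0.le, mul_nonneg hl0.le]
  have hxb : 1 ≤ x ^ β := Real.one_le_rpow_of_pos_of_le_one_of_nonpos hx0 hx.2 hβ.le
  have hyb : 1 ≤ y ^ β := Real.one_le_rpow_of_pos_of_le_one_of_nonpos hy0 hy.2 hβ.le
  have ha0 : (0:ℝ) < x ^ β + y ^ β - 1 := by linarith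
  have ht : (x ^ β + y ^ β - 1) ^ (1/β) ∈ Set.Ioc (0:ℝ) 1 :=
    ⟨Real.rpow_pos_of_pos ha0 _,
     Real.rpow_le_one_of_one_le_of_nonpos (by linarith) (one_div_nonpos.mpr hβ.le)⟩
  have hlx : lam * x ∈ Set.Ioc (0:ℝ) 1 :=
    ⟨mul_pos hl0 hx0, mul_le_one₀ hlam.2 hx.1 hx.2⟩
  have hly : lam * y ∈ Set.Ioc (0:ℝ) 1 :=
    ⟨mul_pos hl0 hy0, mul_le_one₀ hlam.2 hy.1 hy.2⟩
  have hxI : x ∈ Set.Ioc (0:ℝ) 1 := ⟨hx0, hx.2⟩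
  have hyI : y ∈ Set.Ioc (0:ℝ) 1 := ⟨hy0, hy.2⟩
  have hlI : lam ∈ Set.Ioc (0:ℝ) 1 := ⟨hl0, hlam.2⟩
  rw [if_pos ⟨hlx, hly⟩]
  have hT : (if x ∈ Set.Ioc (0:ℝ) 1 ∧ y ∈ Set.Ioc (0:ℝ) 1 then (x ^ β + y ^ β - 1) ^ (1/β)
      else 0) = (x ^ β + y ^ β - 1) ^ (1/β) := if_pos ⟨hxI, hyI⟩
  rw [hT, if_pos ⟨hlI, ht⟩]
  congr 1
  have h1 : (lam * (x ^ β + y ^ β - 1) ^ (1/β)) ^ β = lam ^ β * (x ^ β + y ^ β - 1) := by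
    rw [Real.mul_rpow hl0.le (Real.rpow_pos_of_pos ha0 _).le, ← Real.rpow_mul ha0.le,
      one_div_mul_cancel hb, Real.rpow_one]
  rw [h1, Real.mul_rpow hl0.le hx0.le, Real.mul_rpow hl0.le hy0.le]
  ring
end
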